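/- (One-step Bellman decrease) Let N ≥ 2 be an integer, x ∈ X₀, and let (u(0),…,u(N−1)) be a feasible sequence for the N-QP at x whose cost equals V_N(x), with associated trajectory x(0) = x, x(τ+1) = A x(τ) + B u(τ). Then V_N(x) − V_{N−1}(x(1)) ≥ λ_min(P)·‖x‖² ≥ (λ_min(P)/φ_N)·V_N(x). -/

import Mathlib

/-!
Removing the first step from an optimal `N`-horizon plan leaves a feasible `(N−1)`-horizon plan
from `x(1)`, so `V_N(x) − V_{N−1}(x(1))` is at least the stage cost `xᵀPx + u(0)ᵀQu(0)`.
For the second inequality, `V_N(x)` is bounded by the cost of the linear feedback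
`u(τ) = K Ā^τ x`: the Lyapunov equation gives `W(Ā y) ≤ λ W(y)`, which keeps the closed-loop
trajectory inside `X₀` and turns its cost into a geometric series whose sum is `φ_N ‖x‖²`.
-/

open Matrix Finset Filter Topology

/-- The smallest eigenvalue of a (symmetric) real matrix. -/
noncomputable def lamMin {n : ℕ} (R : Matrix (Fin n) (Fin n) ℝ) : ℝ :=
  if h : R.IsHermitian then ⨅ i, h.eigenvalues i else 0

/-- The largest eigenvalue of a (symmetric) real matrix. -/
noncomputable def lamMax {n : ℕ} (R : Matrix (Fin n) (Fin n) ℝ) : ℝ :=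
  if h : R.IsHermitian then ⨆ i, h.eigenvalues i else 0

/-- The quadratic form `xᵀ R x`. -/
noncomputable def qf {p : ℕ} (R : Matrix (Fin p) (Fin p) ℝ) (x : Fin p → ℝ) : ℝ :=
  x ⬝ᵥ R.mulVec x

/-- λ := 1 − λ_min(Q̄)/λ_max(P̄). -/
noncomputable def lamParam {n : ℕ} (Qb Pb : Matrix (Fin n) (Fin n) ℝ) : ℝ :=
  1 - lamMin Qb / lamMax Pb

/-- φ_N := (λ_max(P̄)·λ_max(P + KᵀQK)/λ_min(P̄))·(1 − λ^{N+1})/(1 − λ). -/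
noncomputable def phi {n m : ℕ} (Qb Pb P : Matrix (Fin n) (Fin n) ℝ)
    (Q : Matrix (Fin m) (Fin m) ℝ) (K : Matrix (Fin m) (Fin n) ℝ) (N : ℕ) : ℝ :=
  (lamMax Pb * lamMax (P + Kᵀ * Q * K) / lamMin Pb) *
    ((1 - lamParam Qb Pb ^ (N + 1)) / (1 - lamParam Qb Pb))

/-- φ_∞ := λ_max(P̄)·λ_max(P + KᵀQK)/(λ_min(P̄)·(1 − λ)). -/
noncomputable def phiInf {n m : ℕ} (Qb Pb P : Matrix (Fin n) (Fin n) ℝ)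
    (Q : Matrix (Fin m) (Fin m) ℝ) (K : Matrix (Fin m) (Fin n) ℝ) : ℝ :=
  lamMax Pb * lamMax (P + Kᵀ * Q * K) / (lamMin Pb * (1 - lamParam Qb Pb))

/-- ψ := λ_max(KᵀQK + ĀᵀPĀ)/λ_min(P). -/
noncomputable def psiC {n m : ℕ} (P Abar : Matrix (Fin n) (Fin n) ℝ)
    (Q : Matrix (Fin m) (Fin m) ℝ) (K : Matrix (Fin m) (Fin n) ℝ) : ℝ :=
  lamMax (Kᵀ * Q * K + Abarᵀ * P * Abar) / lamMin P

/-- χ := 1 − λ_min(P)/φ_∞. -/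
noncomputable def chiC {n m : ℕ} (Qb Pb P : Matrix (Fin n) (Fin n) ℝ)
    (Q : Matrix (Fin m) (Fin m) ℝ) (K : Matrix (Fin m) (Fin n) ℝ) : ℝ :=
  1 - lamMin P / phiInf Qb Pb P Q K

/-- α_N := (λ_max(KᵀQK + ĀᵀPĀ)/λ_min(P))·∏_{κ=0}^{N−1}(1 − λ_min(P)/φ_{κ+1}). -/
noncomputable def alphaC {n m : ℕ} (Qb Pb P Abar : Matrix (Fin n) (Fin n) ℝ)
    (Q : Matrix (Fin m) (Fin m) ℝ) (K : Matrix (Fin m) (Fin n) ℝ) (N : ℕ) : ℝ :=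
  psiC P Abar Q K * ∏ κ ∈ Finset.range N, (1 - lamMin P / phi Qb Pb P Q K (κ + 1))

/-- γ_{N,S} := (1 − λ_min(P)/φ_∞)·max{1 + α_{N−S−1}, (1 + α_{N−1})·∏_{ℓ=N−S}^{N−1}(1 + α_ℓ)}. -/
noncomputable def gammaNS {n m : ℕ} (Qb Pb P Abar : Matrix (Fin n) (Fin n) ℝ)
    (Q : Matrix (Fin m) (Fin m) ℝ) (K : Matrix (Fin m) (Fin n) ℝ) (N S : ℕ) : ℝ :=
  (1 - lamMin P / phiInf Qb Pb P Q K) *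
    max (1 + alphaC Qb Pb P Abar Q K (N - S - 1))
      ((1 + alphaC Qb Pb P Abar Q K (N - 1)) *
        ∏ ℓ ∈ Finset.Ico (N - S) N, (1 + alphaC Qb Pb P Abar Q K ℓ))

/-- The trajectory of `x(τ+1) = A x(τ) + B u(τ)` from `x0` under the control sequence `u`. -/
def traj {n m : ℕ} (A : Matrix (Fin n) (Fin n) ℝ) (B : Matrix (Fin n) (Fin m) ℝ)
    (x0 : Fin n → ℝ) (u : ℕ → Fin m → ℝ) : ℕ → Fin n → ℝ
  | 0 => x0
  | τ + 1 => A *ᵥ traj A B x0 u τ + B *ᵥ u τ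

/-- Feasibility of a control sequence `u(0),…,u(N−1)` for the `N`-QP at `x`. -/
def Feasible {n m : ℕ} (A : Matrix (Fin n) (Fin n) ℝ) (B : Matrix (Fin n) (Fin m) ℝ)
    (X0 : Set (Fin n → ℝ)) (U : Set (Fin m → ℝ)) (N : ℕ) (x : Fin n → ℝ)
    (u : ℕ → Fin m → ℝ) : Prop :=
  (∀ τ < N, u τ ∈ U) ∧ (∀ τ < N, traj A B x u (τ + 1) ∈ X0)

/-- The cost `Σ_{τ=0}^{N−1}(x(τ)ᵀPx(τ) + u(τ)ᵀQu(τ)) + x(N)ᵀPx(N)` of the `N`-QP. -/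
noncomputable def cost {n m : ℕ} (A : Matrix (Fin n) (Fin n) ℝ) (B : Matrix (Fin n) (Fin m) ℝ)
    (P : Matrix (Fin n) (Fin n) ℝ) (Q : Matrix (Fin m) (Fin m) ℝ) (N : ℕ)
    (x : Fin n → ℝ) (u : ℕ → Fin m → ℝ) : ℝ :=
  (∑ τ ∈ Finset.range N, (qf P (traj A B x u τ) + qf Q (u τ))) + qf P (traj A B x u N)

/-- `V_N(x)`: the optimal value of the `N`-QP at `x`. -/
noncomputable def Vopt {n m : ℕ} (A : Matrix (Fin n) (Fin n) ℝ) (B : Matrix (Fin n) (Fin m) ℝ)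
    (P : Matrix (Fin n) (Fin n) ℝ) (Q : Matrix (Fin m) (Fin m) ℝ)
    (X0 : Set (Fin n → ℝ)) (U : Set (Fin m → ℝ)) (N : ℕ) (x : Fin n → ℝ) : ℝ :=
  sInf (cost A B P Q N x '' {u | Feasible A B X0 U N x u})

section QuadraticForm

variable {p q : ℕ}

lemma qf_add (M N : Matrix (Fin p) (Fin p) ℝ) (x : Fin p → ℝ) :
    qf (M + N) x = qf M x + qf N x := by
  simp only [qf, add_mulVec, dotProduct_add]

lemma qf_sub (M N : Matrix (Fin p) (Fin p) ℝ) (x : Fin p → ℝ) :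
    qf (M - N) x = qf M x - qf N x := by
  simp only [qf, sub_mulVec, dotProduct_sub]

lemma qf_transpose_mul_mul (M : Matrix (Fin q) (Fin q) ℝ) (C : Matrix (Fin q) (Fin p) ℝ)
    (x : Fin p → ℝ) : qf (Cᵀ * M * C) x = qf M (C *ᵥ x) := by
  rw [qf, qf, ← mulVec_mulVec, ← mulVec_mulVec, dotProduct_mulVec, vecMul_transpose]

lemma Matrix.PosSemidef.qf_nonneg {R : Matrix (Fin p) (Fin p) ℝ} (hR : R.PosSemidef)
    (x : Fin p → ℝ) : 0 ≤ qf R x := by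
  simpa [qf] using hR.dotProduct_mulVec_nonneg x

lemma Matrix.PosSemidef.transpose_mul_mul_same {M : Matrix (Fin q) (Fin q) ℝ}
    (hM : M.PosSemidef) (C : Matrix (Fin q) (Fin p) ℝ) : (Cᵀ * M * C).PosSemidef := by
  simpa [conjTranspose_eq_transpose_of_trivial] using hM.conjTranspose_mul_mul_same C

lemma le_of_forall_mul_dotProduct_self_le [Nonempty (Fin p)] {a b : ℝ}
    (h : ∀ y : Fin p → ℝ, a * (y ⬝ᵥ y) ≤ b * (y ⬝ᵥ y)) : a ≤ b := by
  simpa [dotProduct, Pi.single_apply] using h (Pi.single (Classical.arbitrary (Fin p)) 1)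

end QuadraticForm

namespace Matrix.IsHermitian

variable {p : ℕ} {R : Matrix (Fin p) (Fin p) ℝ}

/-- The spectral theorem, read in the orthonormal eigenbasis: `y = Uᵀ x`. -/
lemma exists_qf_eq_sum_eigenvalues (hR : R.IsHermitian) (x : Fin p → ℝ) :
    ∃ y : Fin p → ℝ, x ⬝ᵥ x = ∑ i, y i * y i ∧
      qf R x = ∑ i, hR.eigenvalues i * (y i * y i) := by
  set U : Matrix (Fin p) (Fin p) ℝ := (hR.eigenvectorUnitary : Matrix (Fin p) (Fin p) ℝ)
  have hstar : star U = Uᵀ := by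
    simp [star_eq_conjTranspose, conjTranspose_eq_transpose_of_trivial]
  have hUUt : U * Uᵀ = 1 := by
    rw [← hstar]
    exact mem_unitaryGroup_iff.mp hR.eigenvectorUnitary.2
  have hspec := hR.spectral_theorem
  rw [Unitary.conjStarAlgAut_apply, hstar] at hspec
  have hD : diagonal (RCLike.ofReal ∘ hR.eigenvalues) = diagonal hR.eigenvalues := by
    simp
  rw [hD] at hspec
  refine ⟨Uᵀ *ᵥ x, ?_, ?_⟩
  · change x ⬝ᵥ x = (Uᵀ *ᵥ x) ⬝ᵥ (Uᵀ *ᵥ x)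
    rw [dotProduct_mulVec, vecMul_transpose, mulVec_mulVec, hUUt, one_mulVec]
  · calc qf R x = x ⬝ᵥ (U * diagonal hR.eigenvalues * Uᵀ) *ᵥ x := by rw [qf, ← hspec]
      _ = (Uᵀ *ᵥ x) ⬝ᵥ (diagonal hR.eigenvalues *ᵥ (Uᵀ *ᵥ x)) := by
          rw [← mulVec_mulVec, ← mulVec_mulVec, dotProduct_mulVec, ← mulVec_transpose]
      _ = ∑ i, hR.eigenvalues i * ((Uᵀ *ᵥ x) i * (Uᵀ *ᵥ x) i) := by
          simp only [dotProduct, mulVec_diagonal]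
          exact Finset.sum_congr rfl fun i _ => by ring

lemma lamMin_mul_le_qf (hR : R.IsHermitian) (x : Fin p → ℝ) :
    lamMin R * (x ⬝ᵥ x) ≤ qf R x := by
  obtain ⟨y, hnorm, hqf⟩ := hR.exists_qf_eq_sum_eigenvalues x
  rw [lamMin, dif_pos hR, hnorm, hqf, Finset.mul_sum]
  exact Finset.sum_le_sum fun i _ =>
    mul_le_mul_of_nonneg_right (ciInf_le (Set.finite_range _).bddBelow i) (mul_self_nonneg _)

lemma qf_le_lamMax_mul (hR : R.IsHermitian) (x : Fin p → ℝ) :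
    qf R x ≤ lamMax R * (x ⬝ᵥ x) := by
  obtain ⟨y, hnorm, hqf⟩ := hR.exists_qf_eq_sum_eigenvalues x
  rw [lamMax, dif_pos hR, hnorm, hqf, Finset.mul_sum]
  exact Finset.sum_le_sum fun i _ =>
    mul_le_mul_of_nonneg_right (le_ciSup (Set.finite_range _).bddAbove i) (mul_self_nonneg _)

lemma lamMin_le_lamMax [Nonempty (Fin p)] (hR : R.IsHermitian) : lamMin R ≤ lamMax R :=
  le_of_forall_mul_dotProduct_self_le fun y =>
    (hR.lamMin_mul_le_qf y).trans (hR.qf_le_lamMax_mul y)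

end Matrix.IsHermitian

lemma lamMin_of_isEmpty {p : ℕ} [IsEmpty (Fin p)] (R : Matrix (Fin p) (Fin p) ℝ) :
    lamMin R = 0 := by
  simp [lamMin]

namespace Matrix.PosDef

variable {p : ℕ} [Nonempty (Fin p)] {R : Matrix (Fin p) (Fin p) ℝ}

lemma lamMin_pos (hR : R.PosDef) : 0 < lamMin R := by
  rw [lamMin, dif_pos hR.1]
  obtain ⟨i₀, hi₀⟩ := Finite.exists_min hR.1.eigenvalues
  exact (hR.eigenvalues_pos i₀).trans_le (le_ciInf hi₀)

lemma lamMax_pos (hR : R.PosDef) : 0 < lamMax R :=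
  hR.lamMin_pos.trans_le hR.1.lamMin_le_lamMax

end Matrix.PosDef

section Lyapunov

variable {p : ℕ} {Ab Pb Qb : Matrix (Fin p) (Fin p) ℝ}

lemma qf_mulVec_of_lyapunov (hLyap : Abᵀ * Pb * Ab - Pb = -Qb) (y : Fin p → ℝ) :
    qf Pb (Ab *ᵥ y) = qf Pb y - qf Qb y := by
  have hQb : Qb = Pb - Abᵀ * Pb * Ab := by rw [← neg_neg Qb, ← hLyap]; abel
  rw [hQb, qf_sub, qf_transpose_mul_mul]
  ring

lemma qf_mulVec_le_of_lyapunov (hLyap : Abᵀ * Pb * Ab - Pb = -Qb) (hQb : Qb.PosSemidef)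
    (y : Fin p → ℝ) : qf Pb (Ab *ᵥ y) ≤ qf Pb y := by
  linarith [qf_mulVec_of_lyapunov hLyap y, hQb.qf_nonneg y]

variable [Nonempty (Fin p)]

lemma lamParam_nonneg (hLyap : Abᵀ * Pb * Ab - Pb = -Qb) (hQb : Qb.PosDef) (hPb : Pb.PosDef) :
    0 ≤ lamParam Qb Pb := by
  have hle : lamMin Qb ≤ lamMax Pb := le_of_forall_mul_dotProduct_self_le fun y => by
    linarith [hQb.1.lamMin_mul_le_qf y, hPb.1.qf_le_lamMax_mul y,
      qf_mulVec_of_lyapunov hLyap y, hPb.posSemidef.qf_nonneg (Ab *ᵥ y)]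
  rwa [lamParam, sub_nonneg, div_le_one hPb.lamMax_pos]

lemma lamParam_lt_one (hQb : Qb.PosDef) (hPb : Pb.PosDef) : lamParam Qb Pb < 1 := by
  have := div_pos hQb.lamMin_pos hPb.lamMax_pos
  rw [lamParam]
  linarith

/-- Since `Qb ≥ λ_min(Qb) I ≥ (λ_min(Qb)/λ_max(Pb)) Pb`, the equation
`Pb − ĀᵀPbĀ = Qb` removes at least that fraction of `W` at every step. -/
lemma qf_mulVec_le_lamParam_mul (hLyap : Abᵀ * Pb * Ab - Pb = -Qb) (hQb : Qb.PosDef)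
    (hPb : Pb.PosDef) (y : Fin p → ℝ) : qf Pb (Ab *ᵥ y) ≤ lamParam Qb Pb * qf Pb y := by
  have hfrac : lamMin Qb / lamMax Pb * qf Pb y ≤ lamMin Qb * (y ⬝ᵥ y) := by
    calc lamMin Qb / lamMax Pb * qf Pb y
        ≤ lamMin Qb / lamMax Pb * (lamMax Pb * (y ⬝ᵥ y)) := by
          gcongr
          · exact (div_pos hQb.lamMin_pos hPb.lamMax_pos).le
          · exact hPb.1.qf_le_lamMax_mul y
      _ = lamMin Qb * (y ⬝ᵥ y) := by field_simp [hPb.lamMax_pos.ne']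
  rw [qf_mulVec_of_lyapunov hLyap, lamParam]
  linarith [hQb.1.lamMin_mul_le_qf y]

lemma qf_pow_mulVec_le_lamParam_pow_mul (hLyap : Abᵀ * Pb * Ab - Pb = -Qb) (hQb : Qb.PosDef)
    (hPb : Pb.PosDef) (y : Fin p → ℝ) (τ : ℕ) :
    qf Pb ((Ab ^ τ) *ᵥ y) ≤ lamParam Qb Pb ^ τ * qf Pb y := by
  induction τ with
  | zero => simp
  | succ τ ih =>
    rw [pow_succ', ← mulVec_mulVec, pow_succ', mul_assoc]
    exact (qf_mulVec_le_lamParam_mul hLyap hQb hPb _).trans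
      (mul_le_mul_of_nonneg_left ih (lamParam_nonneg hLyap hQb hPb))

lemma qf_pow_mulVec_le_mul_dotProduct {R : Matrix (Fin p) (Fin p) ℝ}
    (hLyap : Abᵀ * Pb * Ab - Pb = -Qb) (hQb : Qb.PosDef) (hPb : Pb.PosDef)
    (hR : R.IsHermitian) (hRmax : 0 ≤ lamMax R) (τ : ℕ) (y : Fin p → ℝ) :
    qf R (Ab ^ τ *ᵥ y)
      ≤ lamMax Pb * lamMax R / lamMin Pb * lamParam Qb Pb ^ τ * (y ⬝ᵥ y) := by
  set z := Ab ^ τ *ᵥ y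
  have hz : z ⬝ᵥ z ≤ lamParam Qb Pb ^ τ * (lamMax Pb * (y ⬝ᵥ y)) / lamMin Pb := by
    rw [le_div_iff₀ hPb.lamMin_pos]
    calc z ⬝ᵥ z * lamMin Pb ≤ qf Pb z := by linarith [hPb.1.lamMin_mul_le_qf z]
      _ ≤ lamParam Qb Pb ^ τ * qf Pb y := qf_pow_mulVec_le_lamParam_pow_mul hLyap hQb hPb y τ
      _ ≤ lamParam Qb Pb ^ τ * (lamMax Pb * (y ⬝ᵥ y)) := by
          gcongr
          · exact pow_nonneg (lamParam_nonneg hLyap hQb hPb) τ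
          · exact hPb.1.qf_le_lamMax_mul y
  calc qf R z ≤ lamMax R * (z ⬝ᵥ z) := hR.qf_le_lamMax_mul z
    _ ≤ lamMax R * (lamParam Qb Pb ^ τ * (lamMax Pb * (y ⬝ᵥ y)) / lamMin Pb) := by gcongr
    _ = _ := by ring

end Lyapunov

section Horizon

variable {n m : ℕ} (A : Matrix (Fin n) (Fin n) ℝ) (B : Matrix (Fin n) (Fin m) ℝ)
  (P : Matrix (Fin n) (Fin n) ℝ) (Q : Matrix (Fin m) (Fin m) ℝ)
  {X0 : Set (Fin n → ℝ)} {U : Set (Fin m → ℝ)}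

lemma traj_tail (x : Fin n → ℝ) (u : ℕ → Fin m → ℝ) (τ : ℕ) :
    traj A B (A *ᵥ x + B *ᵥ u 0) (fun σ => u (σ + 1)) τ = traj A B x u (τ + 1) := by
  induction τ with
  | zero => rfl
  | succ τ ih => simp only [traj, ih]

lemma Feasible.tail {N : ℕ} {x : Fin n → ℝ} {u : ℕ → Fin m → ℝ}
    (h : Feasible A B X0 U (N + 1) x u) :
    Feasible A B X0 U N (A *ᵥ x + B *ᵥ u 0) (fun σ => u (σ + 1)) :=
  ⟨fun τ hτ => h.1 (τ + 1) (by omega),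
    fun τ hτ => traj_tail A B x u (τ + 1) ▸ h.2 (τ + 1) (by omega)⟩

lemma cost_succ (N : ℕ) (x : Fin n → ℝ) (u : ℕ → Fin m → ℝ) :
    cost A B P Q (N + 1) x u
      = qf P x + qf Q (u 0) + cost A B P Q N (A *ᵥ x + B *ᵥ u 0) (fun σ => u (σ + 1)) := by
  simp only [cost, sum_range_succ', traj_tail]
  rw [traj]
  ring

variable {P Q}

lemma cost_nonneg (hP : P.PosSemidef) (hQ : Q.PosSemidef) (N : ℕ) (x : Fin n → ℝ)
    (u : ℕ → Fin m → ℝ) : 0 ≤ cost A B P Q N x u :=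
  add_nonneg (sum_nonneg fun _ _ => add_nonneg (hP.qf_nonneg _) (hQ.qf_nonneg _))
    (hP.qf_nonneg _)

lemma Vopt_le_cost (hP : P.PosSemidef) (hQ : Q.PosSemidef) {N : ℕ} {x : Fin n → ℝ}
    {u : ℕ → Fin m → ℝ} (h : Feasible A B X0 U N x u) :
    Vopt A B P Q X0 U N x ≤ cost A B P Q N x u :=
  csInf_le ⟨0, by rintro _ ⟨v, -, rfl⟩; exact cost_nonneg A B hP hQ N x v⟩ ⟨u, h, rfl⟩

theorem lamMin_mul_le_Vopt_sub_Vopt_tail (hP : P.PosDef) (hQ : Q.PosSemidef) {N : ℕ}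
    {x : Fin n → ℝ} {u : ℕ → Fin m → ℝ} (hfeas : Feasible A B X0 U (N + 1) x u)
    (hopt : cost A B P Q (N + 1) x u = Vopt A B P Q X0 U (N + 1) x) :
    lamMin P * (x ⬝ᵥ x)
      ≤ Vopt A B P Q X0 U (N + 1) x - Vopt A B P Q X0 U N (A *ᵥ x + B *ᵥ u 0) := by
  have htail := Vopt_le_cost A B hP.posSemidef hQ hfeas.tail
  rw [← hopt, cost_succ]
  linarith [hP.1.lamMin_mul_le_qf x, hQ.qf_nonneg (u 0)]

end Horizon

section ClosedLoop

variable {n m : ℕ} (A : Matrix (Fin n) (Fin n) ℝ) (B : Matrix (Fin n) (Fin m) ℝ)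
  (K : Matrix (Fin m) (Fin n) ℝ) {P : Matrix (Fin n) (Fin n) ℝ} {Q : Matrix (Fin m) (Fin m) ℝ}
  {X0 : Set (Fin n → ℝ)} {U : Set (Fin m → ℝ)}

def closedLoopInput (x : Fin n → ℝ) (τ : ℕ) : Fin m → ℝ :=
  K *ᵥ ((A + B * K) ^ τ *ᵥ x)

lemma traj_closedLoopInput (x : Fin n → ℝ) (τ : ℕ) :
    traj A B x (closedLoopInput A B K x) τ = (A + B * K) ^ τ *ᵥ x := by
  induction τ with
  | zero => simp [traj]
  | succ τ ih =>
    rw [traj, ih, closedLoopInput, pow_succ', ← mulVec_mulVec, add_mulVec, ← mulVec_mulVec]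

lemma feasible_closedLoopInput (hinv : ∀ y ∈ X0, (A + B * K) *ᵥ y ∈ X0)
    (hKU : ∀ y ∈ X0, K *ᵥ y ∈ U) (N : ℕ) {x : Fin n → ℝ} (hx : x ∈ X0) :
    Feasible A B X0 U N x (closedLoopInput A B K x) := by
  have hpow : ∀ τ, (A + B * K) ^ τ *ᵥ x ∈ X0 := by
    intro τ
    induction τ with
    | zero => simpa using hx
    | succ τ ih => simpa [pow_succ', ← mulVec_mulVec] using hinv _ ih
  exact ⟨fun τ _ => hKU _ (hpow τ), fun τ _ => traj_closedLoopInput A B K x _ ▸ hpow _⟩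

lemma cost_closedLoopInput_le (hQ : Q.PosSemidef) (N : ℕ) (x : Fin n → ℝ) :
    cost A B P Q N x (closedLoopInput A B K x)
      ≤ ∑ τ ∈ range (N + 1), qf (P + Kᵀ * Q * K) ((A + B * K) ^ τ *ᵥ x) := by
  have hstage : ∀ τ, qf P (traj A B x (closedLoopInput A B K x) τ)
      + qf Q (closedLoopInput A B K x τ) = qf (P + Kᵀ * Q * K) ((A + B * K) ^ τ *ᵥ x) := by
    intro τ
    rw [traj_closedLoopInput, closedLoopInput, qf_add, qf_transpose_mul_mul]
  rw [cost, sum_range_succ, traj_closedLoopInput, qf_add]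
  simp only [hstage]
  linarith [(hQ.transpose_mul_mul_same K).qf_nonneg ((A + B * K) ^ N *ᵥ x)]

end ClosedLoop

section Phi

variable {n m : ℕ} [Nonempty (Fin n)] {Ab Qb Pb P : Matrix (Fin n) (Fin n) ℝ}
  {Q : Matrix (Fin m) (Fin m) ℝ} (K : Matrix (Fin m) (Fin n) ℝ)

lemma phi_eq_mul_geom_sum (hQb : Qb.PosDef) (hPb : Pb.PosDef) (N : ℕ) :
    phi Qb Pb P Q K N = lamMax Pb * lamMax (P + Kᵀ * Q * K) / lamMin Pb *
      ∑ τ ∈ range (N + 1), lamParam Qb Pb ^ τ := by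
  rw [phi, geom_sum_eq (lamParam_lt_one hQb hPb).ne, ← neg_div_neg_eq (_ - 1), neg_sub, neg_sub]

lemma phi_pos (hLyap : Abᵀ * Pb * Ab - Pb = -Qb) (hQb : Qb.PosDef) (hPb : Pb.PosDef)
    (hP : P.PosDef) (hQ : Q.PosSemidef) (N : ℕ) : 0 < phi Qb Pb P Q K N := by
  have hPK := hP.add_posSemidef (hQ.transpose_mul_mul_same K)
  have hgeom := geom_sum_pos (lamParam_nonneg hLyap hQb hPb) N.succ_ne_zero
  have := hPb.lamMax_pos
  have := hPK.lamMax_pos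
  have := hPb.lamMin_pos
  rw [phi_eq_mul_geom_sum K hQb hPb]
  positivity

lemma cost_closedLoopInput_le_phi_mul (A : Matrix (Fin n) (Fin n) ℝ)
    (B : Matrix (Fin n) (Fin m) ℝ)
    (hLyap : (A + B * K)ᵀ * Pb * (A + B * K) - Pb = -Qb) (hQb : Qb.PosDef) (hPb : Pb.PosDef)
    (hP : P.PosDef) (hQ : Q.PosSemidef) (N : ℕ) (x : Fin n → ℝ) :
    cost A B P Q N x (closedLoopInput A B K x) ≤ phi Qb Pb P Q K N * (x ⬝ᵥ x) := by
  have hPK := hP.add_posSemidef (hQ.transpose_mul_mul_same K)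
  calc cost A B P Q N x (closedLoopInput A B K x)
      ≤ ∑ τ ∈ range (N + 1), qf (P + Kᵀ * Q * K) ((A + B * K) ^ τ *ᵥ x) :=
        cost_closedLoopInput_le A B K hQ N x
    _ ≤ ∑ τ ∈ range (N + 1), lamMax Pb * lamMax (P + Kᵀ * Q * K) / lamMin Pb *
          lamParam Qb Pb ^ τ * (x ⬝ᵥ x) :=
        sum_le_sum fun τ _ =>
          qf_pow_mulVec_le_mul_dotProduct hLyap hQb hPb hPK.1 hPK.lamMax_pos.le τ x
    _ = phi Qb Pb P Q K N * (x ⬝ᵥ x) := by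
        rw [phi_eq_mul_geom_sum K hQb hPb, mul_sum, sum_mul]

end Phi

theorem stmt7_general {n m : ℕ}
    (A : Matrix (Fin n) (Fin n) ℝ) (B : Matrix (Fin n) (Fin m) ℝ)
    (K : Matrix (Fin m) (Fin n) ℝ) (Qb Pb : Matrix (Fin n) (Fin n) ℝ)
    (hQb : Qb.PosDef) (hPb : Pb.PosDef)
    (hLyap : (A + B * K)ᵀ * Pb * (A + B * K) - Pb = -Qb)
    (c : ℝ)
    (X0 : Set (Fin n → ℝ)) (hX0 : X0 = {x : Fin n → ℝ | qf Pb x ≤ c})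
    (X : Set (Fin n → ℝ)) (U : Set (Fin m → ℝ))
    (hX0X : X0 ⊆ X) (hKU : ∀ x ∈ X, K *ᵥ x ∈ U)
    (P : Matrix (Fin n) (Fin n) ℝ) (Q : Matrix (Fin m) (Fin m) ℝ)
    (hP : P.PosDef) (hQ : Q.PosDef)
    (N : ℕ) (hN : 2 ≤ N) (x : Fin n → ℝ) (hx : x ∈ X0)
    (u : ℕ → Fin m → ℝ) (hfeas : Feasible A B X0 U N x u)
    (hopt : cost A B P Q N x u = Vopt A B P Q X0 U N x) :
    lamMin P * (x ⬝ᵥ x)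
        ≤ Vopt A B P Q X0 U N x - Vopt A B P Q X0 U (N - 1) (A *ᵥ x + B *ᵥ u 0) ∧
      (lamMin P / phi Qb Pb P Q K N) * Vopt A B P Q X0 U N x ≤ lamMin P * (x ⬝ᵥ x) := by
  obtain ⟨N, rfl⟩ : ∃ k, N = k + 1 := ⟨N - 1, by omega⟩
  refine ⟨by simpa using lamMin_mul_le_Vopt_sub_Vopt_tail A B hP hQ.posSemidef hfeas hopt, ?_⟩
  rcases isEmpty_or_nonempty (Fin n) with hn | hn
  · simp [lamMin_of_isEmpty]
  have hinv : ∀ y ∈ X0, (A + B * K) *ᵥ y ∈ X0 := by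
    subst hX0
    exact fun y hy => (qf_mulVec_le_of_lyapunov hLyap hQb.posSemidef y).trans hy
  have hfeasK := feasible_closedLoopInput A B K hinv (fun y hy => hKU y (hX0X hy)) (N + 1) hx
  have hV : Vopt A B P Q X0 U (N + 1) x ≤ phi Qb Pb P Q K (N + 1) * (x ⬝ᵥ x) :=
    (Vopt_le_cost A B hP.posSemidef hQ.posSemidef hfeasK).trans
      (cost_closedLoopInput_le_phi_mul K A B hLyap hQb hPb hP hQ.posSemidef _ x)
  have hφ := phi_pos K hLyap hQb hPb hP hQ.posSemidef (N + 1)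
  calc lamMin P / phi Qb Pb P Q K (N + 1) * Vopt A B P Q X0 U (N + 1) x
      ≤ lamMin P / phi Qb Pb P Q K (N + 1) * (phi Qb Pb P Q K (N + 1) * (x ⬝ᵥ x)) := by
        gcongr
        exact div_nonneg hP.lamMin_pos.le hφ.le
    _ = lamMin P * (x ⬝ᵥ x) := by field_simp

/-- One-step Bellman decrease: with `(u(0),…,u(N−1))` an optimal feasible
sequence for the `N`-QP at `x ∈ X₀` (`N ≥ 2`) and `x(1) = Ax + Bu(0)`,
`V_N(x) − V_{N−1}(x(1)) ≥ λ_min(P)·‖x‖² ≥ (λ_min(P)/φ_N)·V_N(x)`. -/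
theorem stmt7 {n m : ℕ}
    (A : Matrix (Fin n) (Fin n) ℝ) (B : Matrix (Fin n) (Fin m) ℝ)
    (K : Matrix (Fin m) (Fin n) ℝ) (Qb Pb : Matrix (Fin n) (Fin n) ℝ)
    (hQb : Qb.PosDef) (hPb : Pb.PosDef)
    (hLyap : (A + B * K)ᵀ * Pb * (A + B * K) - Pb = -Qb)
    (c : ℝ) (hc : 0 < c)
    (X0 : Set (Fin n → ℝ)) (hX0 : X0 = {x : Fin n → ℝ | qf Pb x ≤ c})
    (X : Set (Fin n → ℝ)) (U : Set (Fin m → ℝ))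
    (hX : Convex ℝ X) (hU : Convex ℝ U)
    (h0X : (0 : Fin n → ℝ) ∈ X) (h0U : (0 : Fin m → ℝ) ∈ U)
    (hX0X : X0 ⊆ X) (hKU : ∀ x ∈ X, K *ᵥ x ∈ U)
    (P : Matrix (Fin n) (Fin n) ℝ) (Q : Matrix (Fin m) (Fin m) ℝ)
    (hP : P.PosDef) (hQ : Q.PosDef)
    (N : ℕ) (hN : 2 ≤ N) (x : Fin n → ℝ) (hx : x ∈ X0)
    (u : ℕ → Fin m → ℝ) (hfeas : Feasible A B X0 U N x u)
    (hopt : cost A B P Q N x u = Vopt A B P Q X0 U N x) :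
    lamMin P * (x ⬝ᵥ x)
        ≤ Vopt A B P Q X0 U N x - Vopt A B P Q X0 U (N - 1) (A *ᵥ x + B *ᵥ u 0) ∧
      (lamMin P / phi Qb Pb P Q K N) * Vopt A B P Q X0 U N x ≤ lamMin P * (x ⬝ᵥ x) :=
  stmt7_general A B K Qb Pb hQb hPb hLyap c X0 hX0 X U hX0X hKU P Q hP hQ N hN x hx u hfeas hopt
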